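/- arXiv:2107.00490 — 4 statements merged into one kernel-verified Lean document; each statement's English description precedes it below -/
import Mathlib

section
/- For every positive integer k ≥ 2 and every natural number n, the number of binary strings of length n that contain no run of k consecutive zeros satisfies (2 − 1/2^(k−2))^n ≤ |R_k^n| ≤ 2·(2 − 1/2^k)^n. -/
def hasZeroRun (k : ℕ) {n : ℕ} (s : Fin n → Bool) : Prop :=
  ∃ i, ∃ _ : i + k ≤ n, ∀ j, ∀ hj : j < k, s ⟨i + j, by omega⟩ = false

open Classical in
noncomputable def RLLcard (k n : ℕ) : ℕ :=
  (Finset.univ.filter (fun s : Fin n → Bool => ¬ hasZeroRun k s)).card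

/-!
Cutting a string with no run of `k` zeros before its first one, `s = 0^j 1 t` with `j < k`,
gives `|R^n| = ∑_{j<k} |R^(n-1-j)|` for `n ≥ k`, while `|R^n| = 2^n` for `n < k`. A sequence
that satisfies this recursion with `≤` (resp. `≥`) and lies below (resp. above) `|R^n|` for
`n < k` stays below (resp. above) it. For `q = 2 - ε` the identity
`(q - 1) (∑_{j<k} q^j - q^k) = ε q^k - 1` reduces the recursion inequality for `q^n` to comparing
`q^k` with `1 / ε`, and Bernoulli's inequality settles this for `ε = 2^(2-k)` and `ε = 2^(-k)`.
-/

open Finset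

section Recurrence

variable {M : Type*} [AddCommMonoid M]

def prevSum (k : ℕ) (a : ℕ → M) (n : ℕ) : M := ∑ j ∈ range k, a (n - (j + 1))

theorem le_of_le_prevSum_of_prevSum_le [PartialOrder M] [IsOrderedAddMonoid M]
    {k : ℕ} {a b : ℕ → M} (h_init : ∀ n < k, a n ≤ b n)
    (ha : ∀ n, k ≤ n → a n ≤ prevSum k a n) (hb : ∀ n, k ≤ n → prevSum k b n ≤ b n)
    (n : ℕ) : a n ≤ b n := by
  induction n using Nat.strong_induction_on with
  | _ n ih =>
    rcases lt_or_ge n k with hn | hn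
    · exact h_init n hn
    · calc a n ≤ prevSum k a n := ha n hn
        _ ≤ prevSum k b n := sum_le_sum fun j hj => ih _ (by rw [mem_range] at hj; omega)
        _ ≤ b n := hb n hn

lemma prevSum_pow {R : Type*} [CommSemiring R] (q : R) {k n : ℕ} (hn : k ≤ n) :
    prevSum k (q ^ ·) n = q ^ (n - k) * ∑ j ∈ range k, q ^ j := by
  rw [prevSum, mul_sum, ← sum_range_reflect]
  refine sum_congr rfl fun j hj => ?_
  rw [mem_range] at hj
  rw [← pow_add]
  congr 1
  omega

end Recurrence

section Geometric

variable {R : Type*} [CommRing R] [LinearOrder R] [IsStrictOrderedRing R] {q : R} {k : ℕ}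

lemma pow_le_geom_sum (hq : 1 ≤ q) (hk : 1 ≤ k) (h : 1 ≤ (2 - q) * q ^ k) :
    q ^ k ≤ ∑ j ∈ range k, q ^ j := by
  rcases hq.eq_or_lt with rfl | hq
  · simpa using (Nat.one_le_cast (α := R)).mpr hk
  · refine le_of_mul_le_mul_left ?_ (sub_pos.mpr hq)
    linear_combination h - geom_sum_mul q k

lemma geom_sum_le_pow (hq : 1 < q) (h : (2 - q) * q ^ k ≤ 1) :
    ∑ j ∈ range k, q ^ j ≤ q ^ k := by
  refine le_of_mul_le_mul_left ?_ (sub_pos.mpr hq)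
  linear_combination h + geom_sum_mul q k

end Geometric

lemma two_pow_mul_one_sub_le (m n : ℕ) :
    (2 : ℝ) ^ n * (1 - n / 2 ^ (m + 1)) ≤ (2 - 1 / 2 ^ m) ^ n := by
  have hsplit : (2 : ℝ) - 1 / 2 ^ m = 2 * (1 + -(1 / 2 ^ (m + 1))) := by
    rw [pow_succ]; field_simp; ring
  have hsmall : (1 : ℝ) / 2 ^ (m + 1) ≤ 2 := by
    rw [div_le_iff₀ (by positivity)]
    nlinarith [one_le_pow₀ (show (1 : ℝ) ≤ 2 by norm_num) (n := m + 1)]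
  rw [hsplit, mul_pow]
  gcongr
  calc 1 - (n : ℝ) / 2 ^ (m + 1) = 1 + n * -(1 / 2 ^ (m + 1)) := by ring
    _ ≤ _ := one_add_mul_le_pow (by linarith) n

lemma two_pow_le_pow_two_sub (m : ℕ) : (2 : ℝ) ^ m ≤ (2 - 1 / 2 ^ m) ^ (m + 2) := by
  rcases m with _ | p
  · norm_num
  refine le_trans ?_ (two_pow_mul_one_sub_le (p + 1) (p + 3))
  have hp : (p : ℝ) + 1 ≤ 2 ^ p := by exact_mod_cast Nat.lt_two_pow_self
  have h2p : (0 : ℝ) < 2 ^ p := by positivity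
  rw [show (2 : ℝ) ^ (p + 3) = 8 * 2 ^ p by ring,
    show (2 : ℝ) ^ (p + 1 + 1) = 4 * 2 ^ p by ring, show (2 : ℝ) ^ (p + 1) = 2 * 2 ^ p by ring]
  field_simp
  push_cast
  nlinarith

lemma two_pow_le_two_mul_pow_two_sub {k n : ℕ} (hn : n ≤ k) :
    (2 : ℝ) ^ n ≤ 2 * (2 - 1 / 2 ^ k) ^ n := by
  refine le_trans ?_ (mul_le_mul_of_nonneg_left (two_pow_mul_one_sub_le k n) zero_le_two)
  have hk : (n : ℝ) + 1 ≤ 2 ^ k := by exact_mod_cast (hn.trans_lt Nat.lt_two_pow_self)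
  have h2k : (0 : ℝ) < 2 ^ k := by positivity
  rw [pow_succ]
  field_simp
  nlinarith [pow_pos (show (0 : ℝ) < 2 by norm_num) n]

section Combinatorics

variable {k n : ℕ}

open Classical in
noncomputable def RLLset (k n : ℕ) : Finset (Fin n → Bool) :=
  univ.filter fun s => ¬ hasZeroRun k s

lemma RLLcard_eq_card_RLLset (k n : ℕ) : RLLcard k n = #(RLLset k n) := rfl

lemma mem_RLLset {s : Fin n → Bool} : s ∈ RLLset k n ↔ ¬ hasZeroRun k s := by
  simp [RLLset]

lemma RLLcard_of_lt (h : n < k) : RLLcard k n = 2 ^ n := by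
  classical
  rw [RLLcard_eq_card_RLLset, RLLset, filter_true_of_mem fun s _ ⟨i, hi, _⟩ => by omega]
  simp

def prependZerosOne (j n : ℕ) (t : Fin (n - (j + 1)) → Bool) (i : Fin n) : Bool :=
  if hlt : i.val < j then false
  else if heq : i.val = j then true
  else t ⟨i - (j + 1), Nat.sub_lt_sub_right (by omega) i.2⟩

variable {j : ℕ} (t : Fin (n - (j + 1)) → Bool) {i : Fin n}

lemma prependZerosOne_of_lt (h : i.val < j) : prependZerosOne j n t i = false := by
  simp [prependZerosOne, h]

lemma prependZerosOne_self (h : i.val = j) : prependZerosOne j n t i = true := by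
  simp [prependZerosOne, h]

lemma prependZerosOne_of_gt (h : j < i.val) :
    prependZerosOne j n t i = t ⟨i - (j + 1), Nat.sub_lt_sub_right h i.2⟩ := by
  simp [prependZerosOne, show ¬ i.val < j by omega, show i.val ≠ j by omega]

lemma prependZerosOne_add_succ {l : ℕ} (hl : l + (j + 1) < n) :
    prependZerosOne j n t ⟨l + (j + 1), hl⟩ = t ⟨l, by omega⟩ := by
  rw [prependZerosOne_of_gt _ (show j < l + (j + 1) by omega)]
  simp only [Nat.add_sub_cancel]

lemma prependZerosOne_injective : Function.Injective (prependZerosOne j n) := by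
  intro t u h
  funext x
  have hx := congrFun h ⟨x + (j + 1), by omega⟩
  rwa [prependZerosOne_add_succ, prependZerosOne_add_succ] at hx

lemma prependZerosOne_ne {a b : ℕ} (hab : a < b) (ha : a < n)
    (t : Fin (n - (a + 1)) → Bool) (u : Fin (n - (b + 1)) → Bool) :
    prependZerosOne a n t ≠ prependZerosOne b n u := fun h => by
  have ha := congrFun h ⟨a, ha⟩
  rw [prependZerosOne_self (i := ⟨a, _⟩) _ rfl, prependZerosOne_of_lt _ hab] at ha
  exact Bool.noConfusion ha

lemma not_hasZeroRun_prependZerosOne (hjk : j < k) (ht : ¬ hasZeroRun k t) :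
    ¬ hasZeroRun k (prependZerosOne j n t) := by
  rintro ⟨i, hi, hrun⟩
  by_cases hij : i ≤ j
  · have hj := hrun (j - i) (by omega)
    rw [prependZerosOne_self _ (by simp only; omega)] at hj
    exact Bool.noConfusion hj
  · refine ht ⟨i - (j + 1), by omega, fun l hl => ?_⟩
    have hl := hrun l hl
    rw [prependZerosOne_of_gt _ (by simp only; omega)] at hl
    simpa [show i + l - (j + 1) = i - (j + 1) + l by omega] using hl

lemma exists_prependZerosOne (hn : k ≤ n) {s : Fin n → Bool} (hs : ¬ hasZeroRun k s) :
    ∃ j < k, ∃ t, ¬ hasZeroRun k t ∧ prependZerosOne j n t = s := by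
  have hex : ∃ j, ∃ h : j < k, s ⟨j, by omega⟩ = true := by
    by_contra! hno
    exact hs ⟨0, by omega, fun l hl => by simpa using hno l hl⟩
  set j := Nat.find hex
  obtain ⟨hjk, hj⟩ := Nat.find_spec hex
  have hlt : ∀ m (hm : m < j), s ⟨m, by omega⟩ = false := fun m hm =>
    Bool.eq_false_iff.mpr fun h => Nat.find_min hex hm ⟨hm.trans hjk, h⟩
  refine ⟨j, hjk, fun i => s ⟨i + (j + 1), by omega⟩, ?_, ?_⟩
  · rintro ⟨i, hi, hrun⟩
    exact hs ⟨i + (j + 1), by omega, fun l hl => by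
      simpa [show i + (j + 1) + l = i + l + (j + 1) by omega] using hrun l hl⟩
  · funext x
    rcases lt_trichotomy x.val j with h | h | h
    · rw [prependZerosOne_of_lt _ h, hlt x h]
    · rw [prependZerosOne_self _ h, ← hj]
      exact congrArg s (Fin.ext h.symm)
    · rw [prependZerosOne_of_gt _ h]
      exact congrArg s (Fin.ext (by simp only; omega))

lemma RLLcard_eq_prevSum (hn : k ≤ n) : RLLcard k n = prevSum k (RLLcard k) n := by
  classical
  have hset : RLLset k n =
      (range k).biUnion fun j => (RLLset k (n - (j + 1))).image (prependZerosOne j n) := by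
    ext s
    simp only [mem_RLLset, mem_biUnion, mem_range, mem_image]
    constructor
    · exact exists_prependZerosOne hn
    · rintro ⟨j, hjk, t, ht, rfl⟩
      exact not_hasZeroRun_prependZerosOne t hjk ht
  rw [RLLcard_eq_card_RLLset, hset, card_biUnion]
  · exact sum_congr rfl fun j _ => card_image_of_injective _ prependZerosOne_injective
  · intro a ha b hb hab
    simp only [coe_range, Set.mem_Iio] at ha hb
    simp only [Function.onFun, disjoint_left, mem_image, not_exists, not_and]
    rintro _ ⟨t, -, rfl⟩ u - h
    rcases hab.lt_or_gt with hab | hab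
    · exact prependZerosOne_ne hab (by omega) t u h.symm
    · exact prependZerosOne_ne hab (by omega) u t h

end Combinatorics

lemma pow_two_sub_le_RLLcard (m n : ℕ) : (2 - 1 / 2 ^ m : ℝ) ^ n ≤ RLLcard (m + 2) n := by
  set q : ℝ := 2 - 1 / 2 ^ m with hq
  have h2q : 2 - q = 1 / 2 ^ m := by rw [hq]; ring
  have hq1 : 1 ≤ q := by
    have : (1 : ℝ) / 2 ^ m ≤ 1 := by
      rw [div_le_one (by positivity)]; exact one_le_pow₀ one_le_two
    linarith
  have hq2 : q ≤ 2 := by linarith [show (0 : ℝ) < 1 / 2 ^ m by positivity]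
  refine le_of_le_prevSum_of_prevSum_le (k := m + 2) (a := (q ^ ·))
    (b := fun i => (RLLcard (m + 2) i : ℝ))
    (fun n hn => ?_) (fun n hn => ?_) (fun n hn => ?_) n
  · rw [RLLcard_of_lt hn]
    push_cast
    exact pow_le_pow_left₀ (by linarith) hq2 n
  · rw [prevSum_pow q hn, ← pow_sub_mul_pow q hn]
    refine mul_le_mul_of_nonneg_left (pow_le_geom_sum hq1 (by omega) ?_) (by positivity)
    rw [h2q, one_div_mul_eq_div, le_div_iff₀ (by positivity), one_mul]
    exact two_pow_le_pow_two_sub m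
  · rw [RLLcard_eq_prevSum hn, prevSum, prevSum, Nat.cast_sum]

lemma RLLcard_le_two_mul_pow {k : ℕ} (hk : 1 ≤ k) (n : ℕ) :
    (RLLcard k n : ℝ) ≤ 2 * (2 - 1 / 2 ^ k) ^ n := by
  set r : ℝ := 2 - 1 / 2 ^ k with hr
  have h2r : 2 - r = 1 / 2 ^ k := by rw [hr]; ring
  have hr1 : 1 < r := by
    have : (1 : ℝ) / 2 ^ k < 1 := by
      rw [div_lt_one (by positivity)]; exact one_lt_pow₀ one_lt_two (by omega)
    linarith
  have hr2 : r ≤ 2 := by linarith [show (0 : ℝ) < 1 / 2 ^ k by positivity]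
  refine le_of_le_prevSum_of_prevSum_le (k := k) (a := fun i => (RLLcard k i : ℝ))
    (b := (2 * r ^ ·))
    (fun n hn => ?_) (fun n hn => ?_) (fun n hn => ?_) n
  · rw [RLLcard_of_lt hn]
    push_cast
    exact two_pow_le_two_mul_pow_two_sub hn.le
  · rw [RLLcard_eq_prevSum hn, prevSum, prevSum, Nat.cast_sum]
  · have hgeom : ∑ j ∈ range k, r ^ j ≤ r ^ k := by
      refine geom_sum_le_pow hr1 ?_
      rw [h2r, one_div_mul_eq_div, div_le_one (by positivity)]
      exact pow_le_pow_left₀ (by linarith) hr2 k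
    calc prevSum k (2 * r ^ ·) n = 2 * prevSum k (r ^ ·) n := (mul_sum _ _ _).symm
      _ = 2 * (r ^ (n - k) * ∑ j ∈ range k, r ^ j) := by rw [prevSum_pow r hn]
      _ ≤ 2 * (r ^ (n - k) * r ^ k) := by gcongr
      _ = 2 * r ^ n := by rw [pow_sub_mul_pow r hn]

theorem stmt_1 (k : ℕ) (hk : 2 ≤ k) (n : ℕ) :
    (2 - 1/2^(k-2) : ℝ)^n ≤ (RLLcard k n : ℝ) ∧
    (RLLcard k n : ℝ) ≤ 2 * (2 - 1/2^k : ℝ)^n := by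
  obtain ⟨m, rfl⟩ : ∃ m, k = m + 2 := ⟨k - 2, by omega⟩
  rw [Nat.add_sub_cancel]
  exact ⟨pow_two_sub_le_RLLcard m n, RLLcard_le_two_mul_pow (by omega) n⟩
end

section
/- Define S_δ(ℓ,m) = ∑_{t=0}^{ℓ} C(ℓ,t)·min(1, m·δ^t·(1−δ)^{ℓ−t}) for δ ∈ (0,1/2) and positive integers ℓ, m. Under the setup of the previous lemma, (1/2)·S_δ(ℓ,m)/2^ℓ ≤ Pr(w ∈ {r_1,…,r_m}) ≤ S_δ(ℓ,m)/2^ℓ for every w ∈ {0,1}^ℓ. -/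
/-!
Given `r`, the `m` noisy copies are independent and each equals `w` with probability
`p = flipProb δ r w`, so the hitting probability is `1 - (1 - p)^m`, which lies between
`min 1 (m p) / 2` and `min 1 (m p)`. Averaging over `r` and grouping the `r` by their Hamming
distance `t` to `w` (there are `C(ℓ, t)` of them, each with `p = δ^t (1-δ)^(ℓ-t)`) turns the
average of `min 1 (m p)` into `Sdelta δ ℓ m / 2^ℓ`.
-/

noncomputable def flipProb (δ : ℝ) {n : ℕ} (r x : Fin n → Bool) : ℝ :=
  δ ^ (hammingDist r x) * (1 - δ) ^ (n - hammingDist r x)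

noncomputable def Sdelta (δ : ℝ) (ℓ m : ℕ) : ℝ :=
  ∑ t ∈ Finset.range (ℓ + 1),
    (ℓ.choose t : ℝ) * min 1 ((m : ℝ) * δ^t * (1 - δ)^(ℓ - t))

open Finset

theorem bijective_filter_ne {n : ℕ} (w : Fin n → Bool) :
    Function.Bijective fun x : Fin n → Bool => ({i | x i ≠ w i} : Finset (Fin n)) := by
  refine Function.bijective_iff_has_inverse.2 ⟨fun A i => if i ∈ A then !w i else w i, ?_, ?_⟩
  · intro x; funext i; cases hx : x i <;> cases hw : w i <;> simp [hx, hw]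
  · intro A; ext i; by_cases h : i ∈ A <;> simp [h]

theorem sum_apply_hammingDist {M : Type*} [AddCommMonoid M] {n : ℕ} (w : Fin n → Bool)
    (g : ℕ → M) :
    ∑ x : Fin n → Bool, g (hammingDist x w) = ∑ t ∈ range (n + 1), n.choose t • g t := by
  calc ∑ x : Fin n → Bool, g (hammingDist x w) = ∑ A : Finset (Fin n), g #A :=
        Fintype.sum_bijective _ (bijective_filter_ne w) _ _ fun _ => rfl
    _ = ∑ t ∈ range (n + 1), n.choose t • g t := by
        rw [← powerset_univ, sum_powerset_apply_card, card_univ, Fintype.card_fin]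

theorem sum_flipProb (δ : ℝ) {n : ℕ} (r : Fin n → Bool) : ∑ x, flipProb δ r x = 1 := by
  simp only [flipProb, hammingDist_comm r]
  rw [sum_apply_hammingDist r (fun t => δ ^ t * (1 - δ) ^ (n - t))]
  simp only [nsmul_eq_mul]
  have binomial := add_pow δ (1 - δ) n
  rw [add_sub_cancel, one_pow] at binomial
  exact (sum_congr rfl fun _ _ => by ring).trans binomial.symm

theorem flipProb_nonneg {δ : ℝ} (hδ0 : 0 ≤ δ) (hδ1 : δ ≤ 1) {n : ℕ} (r x : Fin n → Bool) :
    0 ≤ flipProb δ r x :=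
  mul_nonneg (pow_nonneg hδ0 _) (pow_nonneg (sub_nonneg.2 hδ1) _)

theorem flipProb_le_one {δ : ℝ} (hδ0 : 0 ≤ δ) (hδ1 : δ ≤ 1) {n : ℕ} (r x : Fin n → Bool) :
    flipProb δ r x ≤ 1 :=
  mul_le_one₀ (pow_le_one₀ hδ0 hδ1) (pow_nonneg (sub_nonneg.2 hδ1) _)
    (pow_le_one₀ (sub_nonneg.2 hδ1) (by linarith))

theorem Sdelta_eq_sum_min (δ : ℝ) (ℓ m : ℕ) (w : Fin ℓ → Bool) :
    Sdelta δ ℓ m = ∑ r : Fin ℓ → Bool, min 1 ((m : ℝ) * flipProb δ r w) := by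
  simp only [flipProb, ← mul_assoc]
  rw [sum_apply_hammingDist w (fun t => min 1 ((m : ℝ) * δ ^ t * (1 - δ) ^ (ℓ - t))), Sdelta]
  simp only [nsmul_eq_mul]

theorem one_sub_one_sub_pow_le_min {p : ℝ} (hp1 : p ≤ 1) (m : ℕ) :
    1 - (1 - p) ^ m ≤ min 1 (m * p) := by
  have hbernoulli := one_add_mul_le_pow (a := -p) (by linarith) m
  refine le_min (by linarith [pow_nonneg (sub_nonneg.2 hp1) m]) ?_
  simp only [← sub_eq_add_neg, mul_neg] at hbernoulli
  linarith

theorem half_min_le_one_sub_one_sub_pow {p : ℝ} (hp0 : 0 ≤ p) (hp1 : p ≤ 1) (m : ℕ) :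
    1 / 2 * min 1 (m * p) ≤ 1 - (1 - p) ^ m := by
  have hq0 : 0 ≤ (1 - p) ^ m := pow_nonneg (sub_nonneg.2 hp1) m
  have hq1 : (1 - p) ^ m ≤ 1 := pow_le_one₀ (sub_nonneg.2 hp1) (by linarith)
  have hkey : (1 - p) ^ m * (1 + m * p) ≤ 1 :=
    calc (1 - p) ^ m * (1 + m * p) ≤ (1 - p) ^ m * (1 + p) ^ m :=
          mul_le_mul_of_nonneg_left (one_add_mul_le_pow (by linarith) m) hq0
      _ = (1 - p ^ 2) ^ m := by rw [← mul_pow]; ring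
      _ ≤ 1 := pow_le_one₀ (by nlinarith) (by nlinarith)
  rcases le_total ((m : ℝ) * p) 1 with h | h
  · rw [min_eq_right h]
    nlinarith [mul_nonneg (sub_nonneg.2 h) (sub_nonneg.2 hq1)]
  · rw [min_eq_left h]
    nlinarith [mul_le_mul_of_nonneg_left h hq0]

theorem sum_prod_mul_ite_exists_eq {α R : Type*} [Fintype α] [DecidableEq α] [CommRing R]
    (p : α → R) (hp : ∑ x, p x = 1) (m : ℕ) (w : α) :
    ∑ xs : Fin m → α, (∏ i, p (xs i)) * (if ∃ i, xs i = w then 1 else 0) =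
      1 - (1 - p w) ^ m := by
  have htotal : ∑ xs : Fin m → α, ∏ i, p (xs i) = 1 := by
    rw [← Fintype.piFinset_univ, ← sum_pow', hp, one_pow]
  have hmiss : ∑ xs : Fin m → α with ¬∃ i, xs i = w, ∏ i, p (xs i) = (1 - p w) ^ m := by
    have : ({xs | ¬∃ i, xs i = w} : Finset (Fin m → α)) =
        Fintype.piFinset fun _ => univ.erase w := by
      ext xs; simp [Fintype.mem_piFinset]
    rw [this, ← sum_pow', sum_erase_eq_sub (mem_univ w), hp]
  simp only [mul_ite, mul_one, mul_zero]
  rw [← sum_filter, eq_sub_iff_add_eq, ← hmiss, sum_filter_add_sum_filter_not, htotal]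

theorem stmt_5_general (δ : ℝ) (hδ0 : 0 < δ) (hδ : δ < 1/2) (ℓ m : ℕ)
    (w : Fin ℓ → Bool) :
    (1/2) * (Sdelta δ ℓ m / 2^ℓ) ≤
      (∑ r : Fin ℓ → Bool, (1/2^ℓ : ℝ) *
        ∑ rs : Fin m → (Fin ℓ → Bool),
          (∏ i, flipProb δ r (rs i)) * (if ∃ i, rs i = w then 1 else 0)) ∧
    (∑ r : Fin ℓ → Bool, (1/2^ℓ : ℝ) *
        ∑ rs : Fin m → (Fin ℓ → Bool),
          (∏ i, flipProb δ r (rs i)) * (if ∃ i, rs i = w then 1 else 0))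
      ≤ Sdelta δ ℓ m / 2^ℓ := by
  have hprob : (∑ r : Fin ℓ → Bool, (1/2^ℓ : ℝ) *
        ∑ rs : Fin m → (Fin ℓ → Bool),
          (∏ i, flipProb δ r (rs i)) * (if ∃ i, rs i = w then 1 else 0)) =
      (∑ r : Fin ℓ → Bool, (1 - (1 - flipProb δ r w) ^ m)) / 2 ^ ℓ := by
    simp only [sum_prod_mul_ite_exists_eq _ (sum_flipProb δ _), sum_div, one_div_mul_eq_div]
  have hδ1 : δ ≤ 1 := by linarith
  have hp0 := fun r => flipProb_nonneg hδ0.le hδ1 r w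
  have hp1 := fun r => flipProb_le_one hδ0.le hδ1 r w
  rw [hprob, Sdelta_eq_sum_min δ ℓ m w, ← mul_div_assoc, mul_sum]
  constructor <;> gcongr with r
  · exact half_min_le_one_sub_one_sub_pow (hp0 r) (hp1 r) m
  · exact one_sub_one_sub_pow_le_min (hp1 r) m

theorem stmt_5 (δ : ℝ) (hδ0 : 0 < δ) (hδ : δ < 1/2) (ℓ m : ℕ) (hm : 0 < m)
    (w : Fin ℓ → Bool) :
    (1/2) * (Sdelta δ ℓ m / 2^ℓ) ≤
      (∑ r : Fin ℓ → Bool, (1/2^ℓ : ℝ) *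
        ∑ rs : Fin m → (Fin ℓ → Bool),
          (∏ i, flipProb δ r (rs i)) * (if ∃ i, rs i = w then 1 else 0)) ∧
    (∑ r : Fin ℓ → Bool, (1/2^ℓ : ℝ) *
        ∑ rs : Fin m → (Fin ℓ → Bool),
          (∏ i, flipProb δ r (rs i)) * (if ∃ i, rs i = w then 1 else 0))
      ≤ Sdelta δ ℓ m / 2^ℓ :=
  stmt_5_general δ hδ0 hδ ℓ m w
end

section
/- If ℓ ≤ (log₂ m)/H(1/2,δ), where H(1/2,δ) = (1/2)log₂(1/δ) + (1/2)log₂(1/(1−δ)), then S_δ(ℓ,m) ≥ 2^{ℓ−1}. -/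
/-! When `ℓ · H(1/2, δ) ≤ log₂ m` we get `m² (δ(1-δ))^ℓ ≥ 1`, and since `δ ≤ 1 - δ` this gives
`m δ^t (1-δ)^(ℓ-t) ≥ 1` for every `t ≤ ℓ/2`. So every term of `S_δ(ℓ, m)` with `t ≤ ℓ/2` has its
`min` equal to `1`, and by the symmetry `C(ℓ, t) = C(ℓ, ℓ - t)` these binomial coefficients already
sum to at least half of `2^ℓ`. -/

open Finset

theorem Nat.two_pow_le_two_mul_sum_range_choose_half (n : ℕ) :
    2 ^ n ≤ 2 * ∑ i ∈ range (n / 2 + 1), n.choose i := by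
  set g : ℕ → ℕ := fun i ↦ if i ∈ range (n / 2 + 1) then n.choose i else 0
  have hg : ∑ i ∈ range (n + 1), g i = ∑ i ∈ range (n / 2 + 1), n.choose i := by
    rw [sum_ite_mem, inter_eq_right.mpr (range_subset_range.mpr (by omega))]
  have hcover : ∀ i ∈ range (n + 1), n.choose i ≤ g i + g (n - i) := by
    intro i hi
    rw [mem_range] at hi
    by_cases hlow : i ≤ n / 2
    · have : g i = n.choose i := if_pos (mem_range.mpr (by omega))
      omega
    · have : g (n - i) = n.choose i :=
        (if_pos (mem_range.mpr (by omega))).trans (Nat.choose_symm (by omega))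
      omega
  calc 2 ^ n = ∑ i ∈ range (n + 1), n.choose i := (sum_range_choose n).symm
    _ ≤ ∑ i ∈ range (n + 1), (g i + g (n - i)) := sum_le_sum hcover
    _ = 2 * ∑ i ∈ range (n / 2 + 1), n.choose i := by
      have hreflect : ∑ i ∈ range (n + 1), g (n - i) = ∑ i ∈ range (n + 1), g i := by
        simpa using sum_range_reflect g (n + 1)
      rw [sum_add_distrib, hreflect, hg, two_mul]

theorem mul_pow_le_sq_pow_mul_pow {R : Type*} [CommSemiring R] [PartialOrder R] [IsOrderedRing R]
    {a b : R} (ha : 0 ≤ a) (hab : a ≤ b) {t n : ℕ} (ht : 2 * t ≤ n) :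
    (a * b) ^ n ≤ (a ^ t * b ^ (n - t)) ^ 2 := by
  obtain ⟨k, rfl⟩ := Nat.exists_eq_add_of_le ht
  have hb : 0 ≤ b := ha.trans hab
  calc (a * b) ^ (2 * t + k) = (a * b) ^ (2 * t) * (a * b) ^ k := pow_add _ _ _
    _ ≤ (a * b) ^ (2 * t) * (b * b) ^ k := by gcongr
    _ = (a ^ t * b ^ (2 * t + k - t)) ^ 2 := by
      rw [show 2 * t + k - t = t + k by omega]; ring

theorem Real.one_le_mul_pow_of_mul_logb_inv_le {b p x : ℝ} {n : ℕ} (hb : 1 < b) (hp : 0 < p)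
    (hx : 0 < x) (h : n * logb b p⁻¹ ≤ logb b x) : 1 ≤ x * p ^ n := by
  rw [← logb_nonneg_iff hb (by positivity), logb_mul hx.ne' (by positivity), logb_pow]
  rw [logb_inv] at h
  linarith

theorem one_le_mul_pow_mul_one_sub_pow {δ m : ℝ} (hδ0 : 0 ≤ δ) (hδ : δ ≤ 1 / 2) (hm : 0 ≤ m)
    {ℓ t : ℕ} (hbig : 1 ≤ m ^ 2 * (δ * (1 - δ)) ^ ℓ) (ht : 2 * t ≤ ℓ) :
    1 ≤ m * δ ^ t * (1 - δ) ^ (ℓ - t) := by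
  have h1δ : 0 ≤ 1 - δ := by linarith
  have hsq : 1 ≤ (m * δ ^ t * (1 - δ) ^ (ℓ - t)) ^ 2 :=
    calc 1 ≤ m ^ 2 * (δ * (1 - δ)) ^ ℓ := hbig
      _ ≤ m ^ 2 * (δ ^ t * (1 - δ) ^ (ℓ - t)) ^ 2 := by
        gcongr; exact mul_pow_le_sq_pow_mul_pow hδ0 (by linarith) ht
      _ = (m * δ ^ t * (1 - δ) ^ (ℓ - t)) ^ 2 := by ring
  exact (one_le_pow_iff_of_nonneg (by positivity) two_ne_zero).mp hsq

theorem sum_range_choose_half_le_Sdelta {δ : ℝ} (hδ0 : 0 ≤ δ) (hδ1 : δ ≤ 1) {ℓ m : ℕ}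
    (h : ∀ t ≤ ℓ / 2, 1 ≤ (m : ℝ) * δ ^ t * (1 - δ) ^ (ℓ - t)) :
    ∑ t ∈ range (ℓ / 2 + 1), (ℓ.choose t : ℝ) ≤ Sdelta δ ℓ m := by
  have h1δ : 0 ≤ 1 - δ := by linarith
  calc ∑ t ∈ range (ℓ / 2 + 1), (ℓ.choose t : ℝ)
      = ∑ t ∈ range (ℓ / 2 + 1),
          (ℓ.choose t : ℝ) * min 1 ((m : ℝ) * δ ^ t * (1 - δ) ^ (ℓ - t)) :=
        sum_congr rfl fun t ht ↦ by
          rw [min_eq_left (h t (Nat.lt_succ_iff.mp (mem_range.mp ht))), mul_one]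
    _ ≤ Sdelta δ ℓ m :=
        sum_le_sum_of_subset_of_nonneg (range_subset_range.mpr (by omega))
          fun t _ _ ↦ mul_nonneg (Nat.cast_nonneg _) (le_min zero_le_one (by positivity))

theorem stmt_8 (δ : ℝ) (hδ0 : 0 < δ) (hδ : δ < 1/2) (ℓ m : ℕ) (hℓ : 0 < ℓ) (hm : 0 < m)
    (h : (ℓ : ℝ) ≤ Real.logb 2 m /
      ((1/2) * Real.logb 2 (1/δ) + (1/2) * Real.logb 2 (1/(1-δ)))) :
    (2 : ℝ)^(ℓ - 1) ≤ Sdelta δ ℓ m := by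
  have hp : 0 < δ * (1 - δ) := mul_pos hδ0 (by linarith)
  have hentropy : (1/2) * Real.logb 2 (1/δ) + (1/2) * Real.logb 2 (1/(1-δ)) =
      Real.logb 2 (δ * (1 - δ))⁻¹ / 2 := by
    rw [mul_inv, Real.logb_mul (by positivity) (inv_ne_zero (by linarith))]
    simp only [one_div]
    ring
  have hentropy_pos : 0 < Real.logb 2 (δ * (1 - δ))⁻¹ :=
    Real.logb_pos one_lt_two ((one_lt_inv₀ hp).mpr (by nlinarith))
  have hlog : ℓ * Real.logb 2 (δ * (1 - δ))⁻¹ ≤ Real.logb 2 ((m : ℝ) ^ 2) := by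
    rw [hentropy, le_div_iff₀ (by positivity)] at h
    rw [Real.logb_pow]
    push_cast
    linarith
  have hbig := Real.one_le_mul_pow_of_mul_logb_inv_le one_lt_two hp (by positivity) hlog
  have hS := sum_range_choose_half_le_Sdelta hδ0.le (by linarith) fun t ht ↦
    one_le_mul_pow_mul_one_sub_pow hδ0.le hδ.le (Nat.cast_nonneg m) hbig (by omega)
  have hcount := Nat.two_pow_le_two_mul_sum_range_choose_half ℓ
  obtain ⟨k, rfl⟩ := Nat.exists_eq_add_one_of_ne_zero hℓ.ne'
  rw [pow_succ] at hcount
  calc (2 : ℝ) ^ (k + 1 - 1) ≤ ∑ t ∈ range ((k + 1) / 2 + 1), ((k + 1).choose t : ℝ) := by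
        exact_mod_cast (show 2 ^ k ≤ _ by omega)
    _ ≤ Sdelta δ (k + 1) m := hS
end

section
/- For any δ ∈ (0,1/2) and any δ' with δ < δ' < 1/2, S_δ(ℓ,m) ≤ 2^{ℓ·H(δ')} + m·2^{−ℓ·D(δ'||δ)}, where H(δ') is the binary entropy and D(δ'||δ) = δ'log₂(δ'/δ) + (1−δ')log₂((1−δ')/(1−δ)). -/
noncomputable def binEnt (p : ℝ) : ℝ :=
  p * Real.logb 2 (1/p) + (1 - p) * Real.logb 2 (1/(1-p))

noncomputable def klBer (p q : ℝ) : ℝ :=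
  p * Real.logb 2 (p/q) + (1 - p) * Real.logb 2 ((1-p)/(1-q))

open Finset Real

lemma sum_range_choose_mul_pow_mul_one_sub_pow (p : ℝ) (ℓ : ℕ) :
    ∑ t ∈ range (ℓ + 1), (ℓ.choose t : ℝ) * (p ^ t * (1 - p) ^ (ℓ - t)) = 1 := by
  calc ∑ t ∈ range (ℓ + 1), (ℓ.choose t : ℝ) * (p ^ t * (1 - p) ^ (ℓ - t))
      = (p + (1 - p)) ^ ℓ := by
        rw [add_pow]
        exact sum_congr rfl fun _ _ => by ring
    _ = 1 := by rw [add_sub_cancel, one_pow]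

lemma pow_mul_pow_sub_eq_rpow (a b : ℝ) {t ℓ : ℕ} (ht : t ≤ ℓ) :
    a ^ t * b ^ (ℓ - t) = a ^ (t : ℝ) * b ^ ((ℓ : ℝ) - t) := by
  rw [← Nat.cast_sub ht, rpow_natCast, rpow_natCast]

lemma rpow_mul_rpow_sub_le {a b : ℝ} (ha : 0 < a) (hab : a ≤ b) {s s' : ℝ} (hs : s ≤ s')
    (n : ℝ) : a ^ s' * b ^ (n - s') ≤ a ^ s * b ^ (n - s) := by
  have hb : 0 < b := ha.trans_le hab
  have factor : ∀ r, a ^ r * b ^ (n - r) = b ^ n * (a / b) ^ r := fun r => by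
    rw [div_rpow ha.le hb.le, rpow_sub hb]
    field_simp
  rw [factor, factor]
  exact mul_le_mul_of_nonneg_left
    (rpow_le_rpow_of_exponent_ge (div_pos ha hb) ((div_le_one hb).2 hab) hs) (by positivity)

lemma rpow_mul_logb {b x : ℝ} (hb : 0 < b) (hb1 : b ≠ 1) (hx : 0 < x) (c : ℝ) :
    b ^ (c * logb b x) = x ^ c := by
  rw [mul_comm, rpow_mul hb.le, rpow_logb hb hb1 hx]

lemma two_rpow_neg_mul_binEnt {p : ℝ} (hp0 : 0 < p) (hp1 : p < 1) (x : ℝ) :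
    (2 : ℝ) ^ (-(x * binEnt p)) = p ^ (x * p) * (1 - p) ^ (x * (1 - p)) := by
  have hexp : -(x * binEnt p) = (x * p) * logb 2 p + (x * (1 - p)) * logb 2 (1 - p) := by
    rw [binEnt, one_div, one_div, logb_inv, logb_inv]
    ring
  rw [hexp, rpow_add two_pos, rpow_mul_logb two_pos (by norm_num) hp0,
    rpow_mul_logb two_pos (by norm_num) (sub_pos.2 hp1)]

lemma two_rpow_neg_mul_klBer {p q : ℝ} (hp0 : 0 < p) (hp1 : p < 1) (hq0 : 0 < q) (hq1 : q < 1)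
    (x : ℝ) :
    (2 : ℝ) ^ (-(x * klBer p q)) = (q / p) ^ (x * p) * ((1 - q) / (1 - p)) ^ (x * (1 - p)) := by
  have hexp : -(x * klBer p q) =
      (x * p) * logb 2 (q / p) + (x * (1 - p)) * logb 2 ((1 - q) / (1 - p)) := by
    rw [klBer, ← inv_div q p, ← inv_div (1 - q) (1 - p), logb_inv, logb_inv]
    ring
  rw [hexp, rpow_add two_pos, rpow_mul_logb two_pos (by norm_num) (by positivity),
    rpow_mul_logb two_pos (by norm_num) (div_pos (sub_pos.2 hq1) (sub_pos.2 hp1))]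

lemma one_le_two_rpow_mul_binEnt_mul {p : ℝ} (hp0 : 0 < p) (hp : p ≤ 1 / 2) {t ℓ : ℕ}
    (ht : t ≤ ℓ) (htp : (t : ℝ) ≤ ℓ * p) :
    1 ≤ (2 : ℝ) ^ ((ℓ : ℝ) * binEnt p) * (p ^ t * (1 - p) ^ (ℓ - t)) := by
  have hmass : p ^ ((ℓ : ℝ) * p) * (1 - p) ^ ((ℓ : ℝ) - ℓ * p) ≤ p ^ t * (1 - p) ^ (ℓ - t) := by
    rw [pow_mul_pow_sub_eq_rpow _ _ ht]
    exact rpow_mul_rpow_sub_le hp0 (by linarith) htp _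
  rw [← mul_one_sub, ← two_rpow_neg_mul_binEnt hp0 (by linarith)] at hmass
  calc (1 : ℝ) = 2 ^ ((ℓ : ℝ) * binEnt p) * 2 ^ (-((ℓ : ℝ) * binEnt p)) := by
        rw [← rpow_add two_pos, add_neg_cancel, rpow_zero]
    _ ≤ _ := mul_le_mul_of_nonneg_left hmass (by positivity)

lemma pow_mul_pow_le_two_rpow_neg_mul_klBer_mul {p q : ℝ} (hq0 : 0 < q) (hqp : q ≤ p)
    (hp1 : p < 1) {t ℓ : ℕ} (ht : t ≤ ℓ) (htp : ℓ * p ≤ (t : ℝ)) :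
    q ^ t * (1 - q) ^ (ℓ - t) ≤
      (2 : ℝ) ^ (-((ℓ : ℝ) * klBer p q)) * (p ^ t * (1 - p) ^ (ℓ - t)) := by
  have hp0 : 0 < p := hq0.trans_le hqp
  have hp1' : 0 < 1 - p := sub_pos.2 hp1
  have hratio : q / p ≤ (1 - q) / (1 - p) := by
    rw [div_le_div_iff₀ hp0 hp1']
    nlinarith
  have hlikelihood : (q / p) ^ t * ((1 - q) / (1 - p)) ^ (ℓ - t) ≤
      (2 : ℝ) ^ (-((ℓ : ℝ) * klBer p q)) := by
    rw [two_rpow_neg_mul_klBer hp0 hp1 hq0 (by linarith), mul_one_sub,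
      pow_mul_pow_sub_eq_rpow _ _ ht]
    exact rpow_mul_rpow_sub_le (div_pos hq0 hp0) hratio htp _
  calc q ^ t * (1 - q) ^ (ℓ - t)
      = (q / p) ^ t * ((1 - q) / (1 - p)) ^ (ℓ - t) * (p ^ t * (1 - p) ^ (ℓ - t)) := by
        rw [div_pow, div_pow]
        field_simp
    _ ≤ _ := mul_le_mul_of_nonneg_right hlikelihood (by positivity)

lemma min_one_le_mul_binomial_mass {p q c : ℝ} (hq0 : 0 < q) (hqp : q ≤ p) (hp : p ≤ 1 / 2)
    (hc : 0 ≤ c) {t ℓ : ℕ} (ht : t ≤ ℓ) :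
    min 1 (c * q ^ t * (1 - q) ^ (ℓ - t)) ≤
      ((2 : ℝ) ^ ((ℓ : ℝ) * binEnt p) + c * (2 : ℝ) ^ (-((ℓ : ℝ) * klBer p q))) *
        (p ^ t * (1 - p) ^ (ℓ - t)) := by
  have hp0 : 0 < p := hq0.trans_le hqp
  have hmass : 0 ≤ p ^ t * (1 - p) ^ (ℓ - t) := by
    have : 0 ≤ 1 - p := by linarith
    positivity
  rw [add_mul]
  rcases le_total (t : ℝ) (ℓ * p) with htp | htp
  · have hD : 0 ≤ c * (2 : ℝ) ^ (-((ℓ : ℝ) * klBer p q)) * (p ^ t * (1 - p) ^ (ℓ - t)) := by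
      positivity
    linarith [min_le_left 1 (c * q ^ t * (1 - q) ^ (ℓ - t)),
      one_le_two_rpow_mul_binEnt_mul hp0 hp ht htp]
  · have hH : 0 ≤ (2 : ℝ) ^ ((ℓ : ℝ) * binEnt p) * (p ^ t * (1 - p) ^ (ℓ - t)) := by
      positivity
    have htail := mul_le_mul_of_nonneg_left
      (pow_mul_pow_le_two_rpow_neg_mul_klBer_mul hq0 hqp (by linarith) ht htp) hc
    rw [← mul_assoc, ← mul_assoc] at htail
    linarith [min_le_right 1 (c * q ^ t * (1 - q) ^ (ℓ - t))]

theorem stmt_9_general (δ δ' : ℝ) (hδ0 : 0 < δ) (hδδ' : δ < δ') (hδ' : δ' < 1/2)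
    (ℓ m : ℕ) :
    Sdelta δ ℓ m ≤
      (2 : ℝ)^((ℓ : ℝ) * binEnt δ') + (m : ℝ) * (2 : ℝ)^(-((ℓ : ℝ) * klBer δ' δ)) := by
  set K := (2 : ℝ)^((ℓ : ℝ) * binEnt δ') + (m : ℝ) * (2 : ℝ)^(-((ℓ : ℝ) * klBer δ' δ))
  calc Sdelta δ ℓ m
      ≤ ∑ t ∈ range (ℓ + 1), (ℓ.choose t : ℝ) * (K * (δ' ^ t * (1 - δ') ^ (ℓ - t))) := by
        refine sum_le_sum fun t ht => mul_le_mul_of_nonneg_left ?_ (Nat.cast_nonneg _)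
        exact min_one_le_mul_binomial_mass hδ0 hδδ'.le hδ'.le (Nat.cast_nonneg m)
          (Nat.lt_succ_iff.mp (mem_range.mp ht))
    _ = K * ∑ t ∈ range (ℓ + 1), (ℓ.choose t : ℝ) * (δ' ^ t * (1 - δ') ^ (ℓ - t)) := by
        rw [mul_sum]
        exact sum_congr rfl fun _ _ => by ring
    _ = K := by rw [sum_range_choose_mul_pow_mul_one_sub_pow, mul_one]

theorem stmt_9 (δ δ' : ℝ) (hδ0 : 0 < δ) (hδδ' : δ < δ') (hδ' : δ' < 1/2)
    (ℓ m : ℕ) (hℓ : 0 < ℓ) (hm : 0 < m) :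
    Sdelta δ ℓ m ≤
      (2 : ℝ)^((ℓ : ℝ) * binEnt δ') + (m : ℝ) * (2 : ℝ)^(-((ℓ : ℝ) * klBer δ' δ)) :=
  stmt_9_general δ δ' hδ0 hδδ' hδ' ℓ m
end
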